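/- arXiv:2106.08230 — 3 statements merged into one kernel-verified Lean document; each statement's English description precedes it below -/
import Mathlib

section
/- The drift velocity identity holds: for a smooth 2π-periodic (in τ) zero-average vector field ũ(x,τ) on ℝ³, the average ⟨(ũ^τ·∇)ũ⟩ equals (1/2)⟨[ũ, ũ^τ]⟩, where [u,v] = (v·∇)u − (u·∇)v is the commutator and ũ^τ is the componentwise tilde-integration in τ. -/
open MeasureTheory intervalIntegral Metric

/-- The τ-average of a function over one period `[0, 2π]`. -/
noncomputable def avg (h : ℝ → ℝ) : ℝ :=
  (1 / (2 * Real.pi)) * ∫ τ in (0:ℝ)..(2 * Real.pi), h τ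

/-- Tilde-integration: the zero-average antiderivative of a zero-average periodic function. -/
noncomputable def tint (h : ℝ → ℝ) : ℝ → ℝ :=
  fun τ => (∫ σ in (0:ℝ)..τ, h σ) - avg (fun t => ∫ σ in (0:ℝ)..t, h σ)

/-- Componentwise tilde-integration of a time-dependent vector field on ℝ³. -/
noncomputable def tintVec (u : (Fin 3 → ℝ) → ℝ → Fin 3 → ℝ)
    (x : Fin 3 → ℝ) (τ : ℝ) (i : Fin 3) : ℝ :=
  tint (fun σ => u x σ i) τ

/-- Partial derivative ∂f/∂xⱼ of a scalar function on ℝ³. -/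
noncomputable def pd (f : (Fin 3 → ℝ) → ℝ) (x : Fin 3 → ℝ) (j : Fin 3) : ℝ :=
  fderiv ℝ f x (Pi.single j 1)

lemma avg_sub {f g : ℝ → ℝ} (hf : Continuous f) (hg : Continuous g) :
    avg (fun τ => f τ - g τ) = avg f - avg g := by
  unfold avg
  rw [intervalIntegral.integral_sub (hf.intervalIntegrable _ _) (hg.intervalIntegrable _ _)]
  ring

lemma avg_add {f g : ℝ → ℝ} (hf : Continuous f) (hg : Continuous g) :
    avg (fun τ => f τ + g τ) = avg f + avg g := by
  unfold avg
  rw [intervalIntegral.integral_add (hf.intervalIntegrable _ _) (hg.intervalIntegrable _ _)]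
  ring

lemma tint_hasDerivAt {h : ℝ → ℝ} (hc : Continuous h) (τ : ℝ) :
    HasDerivAt (tint h) (h τ) τ := by
  have h1 : HasDerivAt (fun t => ∫ σ in (0:ℝ)..t, h σ) (h τ) τ :=
    intervalIntegral.integral_hasDerivAt_right (hc.intervalIntegrable _ _)
      hc.aestronglyMeasurable.stronglyMeasurableAtFilter hc.continuousAt
  exact h1.sub_const (avg (fun t => ∫ σ in (0:ℝ)..t, h σ))

lemma tint_continuous {h : ℝ → ℝ} (hc : Continuous h) : Continuous (tint h) :=
  (intervalIntegral.continuous_primitive (fun a b => hc.intervalIntegrable a b) 0).sub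
    continuous_const

lemma tint_periodic {h : ℝ → ℝ} (hc : Continuous h) (hp : ∀ τ, h (τ + 2 * Real.pi) = h τ)
    (hz : (∫ σ in (0:ℝ)..(2 * Real.pi), h σ) = 0) :
    ∀ τ, tint h (τ + 2 * Real.pi) = tint h τ := by
  intro τ
  have hper : Function.Periodic h (2 * Real.pi) := hp
  have h1 : (∫ σ in (0:ℝ)..(τ + 2 * Real.pi), h σ)
      = (∫ σ in (0:ℝ)..τ, h σ) + ∫ σ in (0:ℝ)..(0 + 2 * Real.pi), h σ :=
    hper.intervalIntegral_add_eq_add 0 τ (fun a b => hc.intervalIntegrable a b)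
  simp only [zero_add] at h1
  simp [tint, h1, hz]

lemma avg_deriv_eq_zero {F F' : ℝ → ℝ} (hd : ∀ τ, HasDerivAt F (F' τ) τ)
    (hc : Continuous F') (hp : F (2 * Real.pi) = F 0) : avg F' = 0 := by
  have h1 : ∫ τ in (0:ℝ)..(2 * Real.pi), F' τ = F (2 * Real.pi) - F 0 :=
    intervalIntegral.integral_eq_sub_of_hasDerivAt (fun t _ => hd t)
      (hc.intervalIntegrable _ _)
  unfold avg
  rw [h1, hp]
  ring

lemma mem_Icc_of_uIoc {τ R σ : ℝ} (hR : |τ| ≤ R) (hσ : σ ∈ Set.uIoc 0 τ) :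
    σ ∈ Set.Icc (-R) R := by
  have h1 : min 0 τ < σ := hσ.1
  have h2 : σ ≤ max 0 τ := hσ.2
  have h3 : -|τ| ≤ min 0 τ := le_min (neg_nonpos.mpr (abs_nonneg τ)) (neg_abs_le τ)
  have h4 : max 0 τ ≤ |τ| := max_le (abs_nonneg τ) (le_abs_self τ)
  exact ⟨by linarith, by linarith⟩

theorem drift_velocity_identity
    (u : (Fin 3 → ℝ) → ℝ → Fin 3 → ℝ)
    (hsm : ∀ i, ContDiff ℝ (⊤ : ℕ∞) fun p : (Fin 3 → ℝ) × ℝ => u p.1 p.2 i)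
    (hper : ∀ x τ, u x (τ + 2 * Real.pi) = u x τ)
    (hzero : ∀ x i, avg (fun τ => u x τ i) = 0) :
    ∀ (x : Fin 3 → ℝ) (i : Fin 3),
      avg (fun τ => ∑ j, tintVec u x τ j * pd (fun y => u y τ i) x j)
        = (1 / 2) *
          avg (fun τ =>
            (∑ j, tintVec u x τ j * pd (fun y => u y τ i) x j)
              - ∑ j, u x τ j * pd (fun y => tintVec u y τ i) x j) := by
  intro x i
  have hcτ : ∀ (y : Fin 3 → ℝ) (k : Fin 3), Continuous fun τ => u y τ k :=
    fun y k => (hsm k).continuous.comp (continuous_const.prodMk continuous_id)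
  have twopi_pos : (0:ℝ) < 2 * Real.pi := by positivity
  have hint0 : ∀ (y : Fin 3 → ℝ) (k : Fin 3),
      (∫ τ in (0:ℝ)..(2 * Real.pi), u y τ k) = 0 := by
    intro y k
    have h := hzero y k
    unfold avg at h
    have h2 : (1 / (2 * Real.pi) : ℝ) ≠ 0 := by positivity
    exact (mul_eq_zero.mp h).resolve_left h2
  set D : (Fin 3 → ℝ) → ℝ → ((Fin 3 → ℝ) →L[ℝ] ℝ) :=
    fun y σ => (fderiv ℝ (fun p : (Fin 3 → ℝ) × ℝ => u p.1 p.2 i) (y, σ)).comp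
      (ContinuousLinearMap.inl ℝ (Fin 3 → ℝ) ℝ) with hDdef
  have hD : ∀ (y : Fin 3 → ℝ) (σ : ℝ), HasFDerivAt (fun y' => u y' σ i) (D y σ) y := by
    intro y σ
    exact (((hsm i).differentiable (by simp) (y, σ)).hasFDerivAt).comp y
      (hasFDerivAt_prodMk_left (𝕜 := ℝ) y σ)
  have hDcont : Continuous fun p : (Fin 3 → ℝ) × ℝ => D p.1 p.2 := by
    have := ((hsm i).continuous_fderiv (by simp)).clm_comp
      (continuous_const (y := ContinuousLinearMap.inl ℝ (Fin 3 → ℝ) ℝ))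
    simpa [hDdef] using this
  have hDx : ∀ y, Continuous fun σ => D y σ :=
    fun y => hDcont.comp (continuous_const.prodMk continuous_id)
  have bound : ∀ R : ℝ, ∃ M : ℝ, ∀ y ∈ closedBall x 2, ∀ σ ∈ Set.Icc (-R) R,
      ‖D y σ‖ ≤ M := by
    intro R
    have hK : IsCompact ((closedBall x 2) ×ˢ Set.Icc (-R) R) :=
      (isCompact_closedBall x 2).prod isCompact_Icc
    obtain ⟨M, hM⟩ := hK.exists_bound_of_continuousOn hDcont.continuousOn
    exact ⟨M, fun y hy σ hσ => hM (y, σ) ⟨hy, hσ⟩⟩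
  -- differentiation under the integral sign
  have key : ∀ (τ : ℝ) (y : Fin 3 → ℝ), y ∈ ball x 1 →
      HasFDerivAt (fun y' => ∫ σ in (0:ℝ)..τ, u y' σ i) (∫ σ in (0:ℝ)..τ, D y σ) y := by
    intro τ y hy
    obtain ⟨M, hM⟩ := bound (|τ| + 1)
    have hball : ∀ y' ∈ ball y 1, y' ∈ closedBall x 2 := by
      intro y' hy'
      have := dist_triangle y' y x
      simp only [mem_ball] at hy hy'
      simp only [mem_closedBall]
      linarith
    exact intervalIntegral.hasFDerivAt_integral_of_dominated_of_fderiv_le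
      (F := fun y' σ => u y' σ i) (F' := fun y' σ => D y' σ) (bound := fun _ => M)
      (ball_mem_nhds y one_pos)
      (Filter.Eventually.of_forall fun y' => ((hcτ y' i).aestronglyMeasurable).restrict)
      ((hcτ y i).intervalIntegrable _ _)
      (((hDx y)).aestronglyMeasurable.restrict)
      (Filter.Eventually.of_forall fun σ hσ y' hy' =>
        hM y' (hball y' hy') σ (mem_Icc_of_uIoc (by linarith [abs_nonneg τ]) hσ))
      intervalIntegrable_const
      (Filter.Eventually.of_forall fun σ _ y' _ => hD y' σ)
  have hprim : ∀ y : Fin 3 → ℝ, Continuous fun t => ∫ σ in (0:ℝ)..t, u y σ i :=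
    fun y => intervalIntegral.continuous_primitive
      (fun a b => (hcτ y i).intervalIntegrable a b) 0
  have hprimD : Continuous fun t => ∫ σ in (0:ℝ)..t, D x σ :=
    intervalIntegral.continuous_primitive (fun a b => (hDx x).intervalIntegrable a b) 0
  have keyC : HasFDerivAt
      (fun y' => ∫ t in (0:ℝ)..(2 * Real.pi), ∫ σ in (0:ℝ)..t, u y' σ i)
      (∫ t in (0:ℝ)..(2 * Real.pi), ∫ σ in (0:ℝ)..t, D x σ) x := by
    obtain ⟨M, hM⟩ := bound (2 * Real.pi + 1)
    have hM0 : 0 ≤ M := le_trans (norm_nonneg _)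
      (hM x (mem_closedBall_self (by norm_num)) 0 ⟨by linarith, by linarith⟩)
    refine intervalIntegral.hasFDerivAt_integral_of_dominated_of_fderiv_le
      (F := fun y' t => ∫ σ in (0:ℝ)..t, u y' σ i)
      (F' := fun y' t => ∫ σ in (0:ℝ)..t, D y' σ)
      (bound := fun _ => 2 * Real.pi * M) (ball_mem_nhds x one_pos)
      (Filter.Eventually.of_forall fun y' => (hprim y').aestronglyMeasurable.restrict)
      ((hprim x).intervalIntegrable _ _)
      (hprimD.aestronglyMeasurable.restrict)
      (Filter.Eventually.of_forall fun t ht y' hy' => ?_)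
      intervalIntegrable_const
      (Filter.Eventually.of_forall fun t _ y' hy' => key t y' hy')
    · have hy'2 : y' ∈ closedBall x 2 := by
        simp only [mem_ball] at hy'
        simp only [mem_closedBall]
        linarith
      have ht2 : |t| ≤ 2 * Real.pi := by
        have h1 : min 0 (2 * Real.pi) < t := ht.1
        have h2 : t ≤ max 0 (2 * Real.pi) := ht.2
        rw [min_eq_left twopi_pos.le] at h1
        rw [max_eq_right twopi_pos.le] at h2
        rw [abs_le]; constructor <;> linarith
      have hb : ∀ σ ∈ Set.uIoc (0:ℝ) t, ‖D y' σ‖ ≤ M := by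
        intro σ hσ
        exact hM y' hy'2 σ (mem_Icc_of_uIoc (by linarith) hσ)
      calc ‖∫ σ in (0:ℝ)..t, D y' σ‖ ≤ M * |t - 0| :=
            intervalIntegral.norm_integral_le_of_norm_le_const hb
        _ ≤ 2 * Real.pi * M := by
            rw [sub_zero]
            nlinarith
  -- the integral of D over a period vanishes
  have hzero2 : (∫ σ in (0:ℝ)..(2 * Real.pi), D x σ) = 0 := by
    have h1 := key (2 * Real.pi) x (mem_ball_self one_pos)
    have h2 : (fun y' => ∫ σ in (0:ℝ)..(2 * Real.pi), u y' σ i)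
        = fun _ => (0:ℝ) := funext fun y' => hint0 y' i
    rw [h2] at h1
    exact h1.unique (hasFDerivAt_const 0 x)
  have hDper : ∀ σ, D x (σ + 2 * Real.pi) = D x σ := by
    intro σ
    have h1 := hD x (σ + 2 * Real.pi)
    have h2 : (fun y' => u y' (σ + 2 * Real.pi) i) = fun y' => u y' σ i :=
      funext fun y' => by rw [hper]
    rw [h2] at h1
    exact h1.unique (hD x σ)
  set g : Fin 3 → ℝ → ℝ := fun j σ => D x σ (Pi.single j 1) with hgdef
  have hgcont : ∀ j, Continuous (g j) := fun j => (hDx x).clm_apply continuous_const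
  have hgper : ∀ j σ, g j (σ + 2 * Real.pi) = g j σ := fun j σ => by
    simp only [hgdef, hDper]
  have hgint0 : ∀ j, (∫ σ in (0:ℝ)..(2 * Real.pi), g j σ) = 0 := by
    intro j
    have h6 : IntervalIntegrable (fun σ => D x σ) volume 0 (2 * Real.pi) :=
      (hDx x).intervalIntegrable _ _
    have h7 := ContinuousLinearMap.intervalIntegral_apply h6 (Pi.single j 1)
    rw [← h7, hzero2]
    simp
  have hpdu : ∀ (τ : ℝ) (j : Fin 3), pd (fun y => u y τ i) x j = g j τ := by
    intro τ j
    unfold pd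
    rw [(hD x τ).fderiv]
  -- derivative of tilde-integrated vector field
  have hTD : ∀ τ : ℝ, HasFDerivAt (fun y => tintVec u y τ i)
      ((∫ σ in (0:ℝ)..τ, D x σ) - (1 / (2 * Real.pi)) •
        (∫ t in (0:ℝ)..(2 * Real.pi), ∫ σ in (0:ℝ)..t, D x σ)) x := by
    intro τ
    have h1 := key τ x (mem_ball_self one_pos)
    have h2 := keyC.const_smul ((1:ℝ) / (2 * Real.pi))
    have h3 := h1.sub h2
    have h4 : (fun y => tintVec u y τ i) = fun y =>
        (∫ σ in (0:ℝ)..τ, u y σ i) - (1 / (2 * Real.pi)) •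
          ∫ t in (0:ℝ)..(2 * Real.pi), ∫ σ in (0:ℝ)..t, u y σ i := by
      funext y
      simp [tintVec, tint, avg, smul_eq_mul]
    rw [h4]
    exact h3
  have hΦi : IntervalIntegrable (fun t => ∫ σ in (0:ℝ)..t, D x σ) volume 0 (2 * Real.pi) :=
    hprimD.intervalIntegrable _ _
  have hpdT : ∀ (τ : ℝ) (j : Fin 3), pd (fun y => tintVec u y τ i) x j = tint (g j) τ := by
    intro τ j
    unfold pd
    rw [(hTD τ).fderiv]
    rw [ContinuousLinearMap.sub_apply, ContinuousLinearMap.smul_apply,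
      ContinuousLinearMap.intervalIntegral_apply ((hDx x).intervalIntegrable _ _),
      ContinuousLinearMap.intervalIntegral_apply hΦi]
    have h5 : ∀ t : ℝ, (∫ σ in (0:ℝ)..t, D x σ) (Pi.single j 1)
        = ∫ σ in (0:ℝ)..t, g j σ := fun t =>
      ContinuousLinearMap.intervalIntegral_apply ((hDx x).intervalIntegrable _ _) _
    simp_rw [h5]
    simp [tint, avg, smul_eq_mul, hgdef]
  -- set up the summands
  set A : ℝ → ℝ := fun τ => ∑ j, tint (fun σ => u x σ j) τ * g j τ with hAdef
  set B : ℝ → ℝ := fun τ => ∑ j, u x τ j * tint (g j) τ with hBdef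
  have hAc : Continuous A :=
    continuous_finset_sum _ fun j _ => (tint_continuous (hcτ x j)).mul (hgcont j)
  have hBc : Continuous B :=
    continuous_finset_sum _ fun j _ => (hcτ x j).mul (tint_continuous (hgcont j))
  have hA : (fun τ => ∑ j, tintVec u x τ j * pd (fun y => u y τ i) x j) = A := by
    funext τ
    exact Finset.sum_congr rfl fun j _ => by rw [hpdu τ j]; rfl
  have hB : (fun τ => ∑ j, u x τ j * pd (fun y => tintVec u y τ i) x j) = B := by
    funext τ
    exact Finset.sum_congr rfl fun j _ => by rw [hpdT τ j]
  -- avg (A + B) = 0 via integration by parts in τ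
  set P : ℝ → ℝ := fun τ => ∑ j, tint (fun σ => u x σ j) τ * tint (g j) τ with hPdef
  have hPd : ∀ τ, HasDerivAt P (A τ + B τ) τ := by
    intro τ
    have h4 : A τ + B τ = ∑ j, (u x τ j * tint (g j) τ
        + tint (fun σ => u x σ j) τ * g j τ) := by
      rw [Finset.sum_add_distrib, hAdef, hBdef]
      ring
    rw [h4]
    exact HasDerivAt.fun_sum fun j _ =>
      (tint_hasDerivAt (hcτ x j) τ).mul (tint_hasDerivAt (hgcont j) τ)
  have hPper : P (2 * Real.pi) = P 0 := by
    have := fun j : Fin 3 => tint_periodic (hcτ x j) (fun τ => by rw [hper]) (hint0 x j) 0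
    have hg2 := fun j : Fin 3 => tint_periodic (hgcont j) (hgper j) (hgint0 j) 0
    simp only [hPdef]
    refine Finset.sum_congr rfl fun j _ => ?_
    rw [show (2 * Real.pi) = 0 + 2 * Real.pi by ring, this j, hg2 j]
  have hABzero : avg A + avg B = 0 := by
    rw [← avg_add hAc hBc]
    exact avg_deriv_eq_zero hPd (hAc.add hBc) hPper
  have hfun : (fun τ => (∑ j, tintVec u x τ j * pd (fun y => u y τ i) x j)
        - ∑ j, u x τ j * pd (fun y => tintVec u y τ i) x j)
      = fun τ => A τ - B τ := by
    funext τ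
    rw [congrFun hA τ, congrFun hB τ]
  rw [hA, hfun, avg_sub hAc hBc]
  linarith
end

section
/- For the averaged DL-2 predator–prey system dx̄₀/ds = A x̄₀ȳ₀ − B x̄₀²ȳ₀, dȳ₀/ds = −C x̄₀ȳ₀ + B x̄₀ȳ₀², with B ≠ 0, the quantity I(x,y) = (x − A/B)(y − C/B) is a first integral: along any solution, dI/ds = 0. -/
theorem predator_prey_first_integral
    (A B C : ℝ) (hB : B ≠ 0) (x y : ℝ → ℝ)
    (hx : ∀ s, HasDerivAt x (A * x s * y s - B * (x s) ^ 2 * y s) s)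
    (hy : ∀ s, HasDerivAt y (-C * x s * y s + B * x s * (y s) ^ 2) s) :
    ∀ s, HasDerivAt (fun s => (x s - A / B) * (y s - C / B)) 0 s := by
  intro s
  have h := ((hx s).sub_const (A / B)).mul ((hy s).sub_const (C / B))
  refine h.congr_deriv ?_
  field_simp
  ring
end

section
/- If the velocity field u(x,t) is smooth and satisfies the no-leak condition u(x,t)·n(x) = 0 on the boundary ∂D of a fixed smooth domain D (for all t), then the drift velocity V̄₂ also satisfies V̄₂(x)·n(x) = 0 on ∂D, in the special case where ∂D is locally the hyperplane {x₃ = 0} with n = e₃ and u₃(x,τ) = 0 for all x with x₃ = 0. -/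
lemma avg_zero : avg (fun _ => (0:ℝ)) = 0 := by
  simp [avg]

lemma tint_zero (τ : ℝ) : tint (fun _ => (0:ℝ)) τ = 0 := by
  simp [tint, avg]

theorem drift_no_leak_flat_boundary
    (u : (Fin 3 → ℝ) → ℝ → Fin 3 → ℝ)
    (hsm : ∀ i, ContDiff ℝ (⊤ : ℕ∞) fun p : (Fin 3 → ℝ) × ℝ => u p.1 p.2 i)
    (hper : ∀ x τ, u x (τ + 2 * Real.pi) = u x τ)
    (hzero : ∀ x i, avg (fun τ => u x τ i) = 0)
    (hnoleak : ∀ x : Fin 3 → ℝ, x 2 = 0 → ∀ τ, u x τ 2 = 0) :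
    ∀ x : Fin 3 → ℝ, x 2 = 0 →
      avg (fun τ => ∑ j, tintVec u x τ j * pd (fun y => u y τ 2) x j) = 0 := by
  intro x hx
  -- differentiability of y ↦ u y τ 2
  have hdiff : ∀ τ : ℝ, DifferentiableAt ℝ (fun y => u y τ 2) x := by
    intro τ
    have h1 : Differentiable ℝ (fun p : (Fin 3 → ℝ) × ℝ => u p.1 p.2 2) :=
      (hsm 2).differentiable (by simp)
    have h2 : Differentiable ℝ (fun y : Fin 3 → ℝ => (y, τ)) :=
      differentiable_id.prodMk (differentiable_const τ)
    exact (h1.comp h2) x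
  -- tangential derivatives vanish
  have hpd : ∀ τ : ℝ, ∀ j : Fin 3, j ≠ 2 → pd (fun y => u y τ 2) x j = 0 := by
    intro τ j hj
    set v : Fin 3 → ℝ := Pi.single j (1:ℝ) with hvdef
    have hv2 : v 2 = 0 := Pi.single_eq_of_ne (Ne.symm hj) 1
    have hc : HasDerivAt (fun t : ℝ => x + t • v) v 0 := by
      have : HasDerivAt (fun t : ℝ => t • v) ((1:ℝ) • v) 0 :=
        (hasDerivAt_id 0).smul_const v
      simpa using this.const_add x
    have hf : HasFDerivAt (fun y => u y τ 2) (fderiv ℝ (fun y => u y τ 2) x) x :=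
      (hdiff τ).hasFDerivAt
    have hc0 : x + (0:ℝ) • v = x := by simp
    have hcomp : HasDerivAt (fun t : ℝ => u (x + t • v) τ 2)
        (fderiv ℝ (fun y => u y τ 2) x v) 0 := by
      have := (hc0 ▸ hf).comp_hasDerivAt 0 hc
      simpa [Function.comp_def] using this
    have hzero' : (fun t : ℝ => u (x + t • v) τ 2) = fun _ => 0 := by
      funext t
      apply hnoleak _ _ τ
      simp [hx, hv2]
    rw [hzero'] at hcomp
    have : fderiv ℝ (fun y => u y τ 2) x v = 0 :=
      hcomp.unique (hasDerivAt_const 0 0)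
    simpa [pd, hvdef] using this
  -- normal component of tilde-integral vanishes
  have htv : ∀ τ : ℝ, tintVec u x τ 2 = 0 := by
    intro τ
    have : (fun σ => u x σ 2) = fun _ => (0:ℝ) := by
      funext σ; exact hnoleak x hx σ
    rw [tintVec, this, tint_zero]
  have hsum : (fun τ => ∑ j, tintVec u x τ j * pd (fun y => u y τ 2) x j)
      = fun _ => (0:ℝ) := by
    funext τ
    rw [Fin.sum_univ_three]
    rw [hpd τ 0 (by decide), hpd τ 1 (by decide), htv τ]
    ring
  rw [hsum, avg_zero]
end
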